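/- arXiv:1912.00883 — 2 statements merged into one kernel-verified Lean document; each statement's English description precedes it below -/
import Mathlib

section
/- Suppose gcd(p, n) = 1 where q is a power of p. Write F_{q^n} = V_1 ⊕ ⋯ ⊕ V_r where V_i = ker(f_i) (under the Frobenius action) and x^n − 1 = f_1 ⋯ f_r with f_i distinct irreducibles. Then β = β_1 + ⋯ + β_r with β_i ∈ V_i is a normal element if and only if β_i ≠ 0 for every i. -/
/-!
Let `σ` be the Frobenius `x ↦ x ^ q`, an `F_q`-linear endomorphism of `F_{q^n}`, so that
`f ∘ α = f(σ) α`. As `F_{q^n}` has dimension `n`, `β` is normal iff no nonzero polynomial of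
degree `< n` kills `β`. The `f_i` are pairwise coprime, so a polynomial kills `β` iff it kills every
`β_i`, and since `f_i` is irreducible, it kills a nonzero `β_i` iff it is a multiple of `f_i`.
Hence if every `β_i ≠ 0`, a polynomial killing `β` is a multiple of `∏ f_i = x^n - 1`, whereas if
`β_j = 0`, then `∏_{i ≠ j} f_i`, of degree `< n`, kills `β`.
-/

open Polynomial

variable {Fq Fqn : Type*}

/-- Frobenius action of a polynomial on a field element: `f ∘ α = Σ aᵢ α^(q^i)`. -/
noncomputable def circ [Field Fq] [Field Fqn] [Algebra Fq Fqn] (q : ℕ) (f : Fq[X]) (α : Fqn) : Fqn :=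
  f.sum fun i a => algebraMap Fq Fqn a * α ^ q ^ i

/-- `α` is a normal element: its conjugates `α, α^q, …, α^(q^(n-1))` form an `Fq`-basis. -/
def IsNormal (Fq : Type*) {Fqn : Type*} [Field Fq] [Field Fqn] [Algebra Fq Fqn]
    (q n : ℕ) (α : Fqn) : Prop :=
  LinearIndependent Fq (fun i : Fin n => α ^ q ^ (i : ℕ)) ∧
    Submodule.span Fq (Set.range fun i : Fin n => α ^ q ^ (i : ℕ)) = ⊤

/-- `A` is the annihilator of `α`: the monic polynomial of least degree with `A ∘ α = 0`. -/
def IsAnnihilator [Field Fq] [Field Fqn] [Algebra Fq Fqn] (q : ℕ) (α : Fqn) (A : Fq[X]) : Prop :=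
  A.Monic ∧ circ q A α = 0 ∧ ∀ B : Fq[X], B.Monic → circ q B α = 0 → A.degree ≤ B.degree

open Function

namespace Module.End

variable {K V : Type*} [Field K] [AddCommGroup V] [Module K V] (φ : Module.End K V)

theorem aeval_apply_comm (f g : K[X]) (v : V) :
    aeval φ f (aeval φ g v) = aeval φ g (aeval φ f v) := by
  rw [← mul_apply, ← map_mul, mul_comm, map_mul, mul_apply]

theorem aeval_apply_eq_zero_of_dvd {f g : K[X]} (hfg : f ∣ g) {v : V} (hf : aeval φ f v = 0) :
    aeval φ g v = 0 := by
  obtain ⟨c, rfl⟩ := hfg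
  rw [mul_comm, map_mul, mul_apply, hf, map_zero]

theorem aeval_eq_sum_degreeLTEquiv {n : ℕ} {p : K[X]} (hp : p ∈ degreeLT K n) (v : V) :
    aeval φ p v = ∑ i, degreeLTEquiv K n ⟨p, hp⟩ i • (φ ^ (i : ℕ)) v := by
  rw [aeval_endomorphism]
  exact (sum_fin (fun i a => a • (φ ^ i) v) (by simp) (mem_degreeLT.mp hp)).symm

theorem linearIndependent_pow_apply_iff (n : ℕ) (v : V) :
    LinearIndependent K (fun i : Fin n => (φ ^ (i : ℕ)) v) ↔
      ∀ p ∈ degreeLT K n, aeval φ p v = 0 → p = 0 := by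
  rw [Fintype.linearIndependent_iff, (degreeLTEquiv K n).surjective.forall]
  simp only [Subtype.forall]
  refine forall₂_congr fun p hp => ?_
  rw [aeval_eq_sum_degreeLTEquiv φ hp, ← funext_iff, ← Pi.zero_def,
    LinearEquiv.map_eq_zero_iff, Submodule.mk_eq_zero]

theorem dvd_of_aeval_apply_eq_zero {f g : K[X]} (hf : Irreducible f) {v : V} (hv : v ≠ 0)
    (hfv : aeval φ f v = 0) (hgv : aeval φ g v = 0) : f ∣ g := by
  by_contra hfg
  exact hv (Submodule.disjoint_def.1
    (disjoint_ker_aeval_of_isCoprime φ (hf.coprime_iff_not_dvd.2 hfg)) v hfv hgv)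

theorem aeval_apply_sum_eq_zero_iff {ι : Type*} [Fintype ι] {f : ι → K[X]}
    (hf : Pairwise (IsCoprime on f)) {β : ι → V} (hβ : ∀ i, aeval φ (f i) (β i) = 0) (p : K[X]) :
    aeval φ p (∑ i, β i) = 0 ↔ ∀ i, aeval φ p (β i) = 0 := by
  classical
  refine ⟨fun hp j => ?_, fun hp => by simp [map_sum, hp]⟩
  set g := ∏ i ∈ Finset.univ.erase j, f i
  have hg : aeval φ g (∑ i, β i) = aeval φ g (β j) := by
    rw [map_sum]
    refine Finset.sum_eq_single j (fun i _ hij => ?_) (by simp)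
    exact aeval_apply_eq_zero_of_dvd φ (Finset.dvd_prod_of_mem f (by simp [hij])) (hβ i)
  have hcop : IsCoprime (f j) g :=
    IsCoprime.prod_right fun i hi => hf (Finset.ne_of_mem_erase hi).symm
  refine Submodule.disjoint_def.1 (disjoint_ker_aeval_of_isCoprime φ hcop) _ ?_ ?_
  · rw [LinearMap.mem_ker, aeval_apply_comm, hβ j, map_zero]
  · rw [LinearMap.mem_ker, aeval_apply_comm, ← hg, aeval_apply_comm, hp, map_zero]

theorem linearIndependent_pow_apply_sum_iff {ι : Type*} [Fintype ι] {n : ℕ} {f : ι → K[X]}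
    (hirr : ∀ i, Irreducible (f i)) (hcop : Pairwise (IsCoprime on f))
    (hdeg : (∏ i, f i).natDegree = n) {β : ι → V} (hβ : ∀ i, aeval φ (f i) (β i) = 0) :
    LinearIndependent K (fun i : Fin n => (φ ^ (i : ℕ)) (∑ i, β i)) ↔ ∀ i, β i ≠ 0 := by
  classical
  have hprod : ∏ i, f i ≠ 0 := Finset.prod_ne_zero_iff.2 fun i _ => (hirr i).ne_zero
  rw [linearIndependent_pow_apply_iff]
  constructor
  · intro h j hj
    set g := ∏ i ∈ Finset.univ.erase j, f i
    have hg0 : g ≠ 0 := Finset.prod_ne_zero_iff.2 fun i _ => (hirr i).ne_zero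
    have hgdeg : g.natDegree < n := by
      have hmul := natDegree_mul (hirr j).ne_zero hg0
      rw [Finset.mul_prod_erase _ _ (Finset.mem_univ j), hdeg] at hmul
      have := (hirr j).natDegree_pos
      omega
    have hgβ : aeval φ g (∑ i, β i) = 0 := by
      refine (aeval_apply_sum_eq_zero_iff φ hcop hβ g).2 fun i => ?_
      rcases eq_or_ne i j with rfl | hij
      · rw [hj, map_zero]
      · exact aeval_apply_eq_zero_of_dvd φ (Finset.dvd_prod_of_mem f (by simp [hij])) (hβ i)
    exact hg0 (h g (mem_degreeLT.2 ((natDegree_lt_iff_degree_lt hg0).1 hgdeg)) hgβ)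
  · intro h p hp hpβ
    have hdvd : ∏ i, f i ∣ p := Fintype.prod_dvd_of_coprime hcop fun i =>
      dvd_of_aeval_apply_eq_zero φ (hirr i) (h i) (hβ i)
        ((aeval_apply_sum_eq_zero_iff φ hcop hβ p).1 hpβ i)
    refine eq_zero_of_dvd_of_degree_lt hdvd ?_
    rw [degree_eq_natDegree hprod, hdeg]
    exact mem_degreeLT.1 hp

end Module.End

theorem Polynomial.pairwise_isCoprime_of_monic_of_irreducible {K ι : Type*} [Field K]
    {f : ι → K[X]} (hmonic : ∀ i, (f i).Monic) (hirr : ∀ i, Irreducible (f i))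
    (hinj : Injective f) : Pairwise (IsCoprime on f) := fun i j hij =>
  (hirr i).coprime_iff_not_dvd.2 fun hdvd => hij <| hinj <|
    eq_of_monic_of_associated (hmonic i) (hmonic j) ((hirr i).associated_of_dvd (hirr j) hdvd)

namespace FiniteField

variable {K L : Type*} [Field K] [Fintype K] [Field L] [Algebra K L]

theorem frobeniusAlgHom_toLinearMap_pow_apply (i : ℕ) (x : L) :
    ((frobeniusAlgHom K L).toLinearMap ^ i) x = x ^ Fintype.card K ^ i := by
  rw [Module.End.pow_apply]
  exact congr_fun (pow_iterate _ i) x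

end FiniteField

theorem circ_card_eq_aeval_frobenius [Field Fq] [Fintype Fq] [Field Fqn] [Algebra Fq Fqn]
    (f : Fq[X]) (α : Fqn) :
    circ (Fintype.card Fq) f α = aeval (FiniteField.frobeniusAlgHom Fq Fqn).toLinearMap f α := by
  simp only [circ, aeval_endomorphism, FiniteField.frobeniusAlgHom_toLinearMap_pow_apply,
    Algebra.smul_def]

theorem isNormal_iff_linearIndependent [Field Fq] [Field Fqn] [Algebra Fq Fqn]
    [FiniteDimensional Fq Fqn] {q n : ℕ} (hrank : Module.finrank Fq Fqn = n) (α : Fqn) :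
    IsNormal Fq q n α ↔ LinearIndependent Fq (fun i : Fin n => α ^ q ^ (i : ℕ)) :=
  ⟨And.left, fun h => ⟨h, h.span_eq_top_of_card_eq_finrank' (by simp [hrank])⟩⟩

theorem stmt8_general (q n : ℕ) [Field Fq] [Fintype Fq] [Field Fqn] [Algebra Fq Fqn]
    (hcard : Fintype.card Fq = q)
    (hn : 0 < n) (hrank : Module.finrank Fq Fqn = n)
    (r : ℕ) (f : Fin r → Fq[X]) (hirr : ∀ i, Irreducible (f i))
    (hmonic : ∀ i, (f i).Monic) (hinj : Function.Injective f)
    (hfact : (X : Fq[X]) ^ n - 1 = ∏ i, f i)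
    (β : Fin r → Fqn) (hker : ∀ i, circ q (f i) (β i) = 0) :
    IsNormal Fq q n (∑ i, β i) ↔ ∀ i, β i ≠ 0 := by
  subst hcard
  have : FiniteDimensional Fq Fqn := Module.finite_of_finrank_pos (hrank ▸ hn)
  have hdeg : (∏ i, f i).natDegree = n := by
    simpa [← hfact] using natDegree_X_pow_sub_C (n := n) (r := (1 : Fq))
  rw [isNormal_iff_linearIndependent hrank]
  simp_rw [← FiniteField.frobeniusAlgHom_toLinearMap_pow_apply (K := Fq)]
  refine Module.End.linearIndependent_pow_apply_sum_iff _ hirr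
    (pairwise_isCoprime_of_monic_of_irreducible hmonic hirr hinj) hdeg fun i => ?_
  rw [← circ_card_eq_aeval_frobenius, hker i]

theorem stmt8 (p m q n : ℕ) [Field Fq] [Fintype Fq] [Field Fqn] [Algebra Fq Fqn]
    (hp : p.Prime) (hm : 0 < m) (hpq : q = p ^ m) (hcard : Fintype.card Fq = q)
    (hn : 0 < n) (hrank : Module.finrank Fq Fqn = n) (hcop : Nat.Coprime p n)
    (r : ℕ) (f : Fin r → Fq[X]) (hirr : ∀ i, Irreducible (f i))
    (hmonic : ∀ i, (f i).Monic) (hinj : Function.Injective f)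
    (hfact : (X : Fq[X]) ^ n - 1 = ∏ i, f i)
    (β : Fin r → Fqn) (hker : ∀ i, circ q (f i) (β i) = 0) :
    IsNormal Fq q n (∑ i, β i) ↔ ∀ i, β i ≠ 0 :=
  stmt8_general q n hcard hn hrank r f hirr hmonic hinj hfact β hker
end

section
/- Let α be a normal element of F_{q^n}. An element β = g ∘ α has normal α-depth b if and only if gcd(x^n − 1, g(x) − c) = 1 for all c ∈ {0, 1, ..., b−1} (interpreted in F_q). -/
open Polynomial

variable {Fq Fqn : Type*}

/-! The Frobenius `x ↦ x ^ q` is an `F_q`-linear endomorphism `φ` of `F_{q^n}` with `φ ^ n = 1`, and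
`g ∘ α - c α = (g - c)(φ) α`; normality of `α` says that `α, φ α, …, φ^(n-1) α` is a basis.
For such a cyclic vector `α`, `f(φ) α` is again cyclic iff `f(φ)` is invertible iff `f` is coprime
to `X ^ n - 1`. A Bézout identity inverts `f(φ)`; conversely a common factor `d` of
`X ^ n - 1 = d h` and `f` gives `h(φ) (f(φ) α) = 0` with `deg h < n`, a nontrivial linear relation
among the conjugates of `f(φ) α`. -/

namespace Module.End

variable {K V : Type*} [Field K] [AddCommGroup V] [Module K V]

def IsCyclicBasis (φ : End K V) (n : ℕ) (v : V) : Prop :=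
  LinearIndependent K (fun i : Fin n => (φ ^ (i : ℕ)) v) ∧
    Submodule.span K (Set.range fun i : Fin n => (φ ^ (i : ℕ)) v) = ⊤

variable {φ : End K V} {n : ℕ} {v : V} {f P : K[X]}

theorem pow_apply_aeval_apply (i : ℕ) (v : V) :
    (φ ^ i) (aeval φ f v) = aeval φ f ((φ ^ i) v) := by
  rw [← mul_apply, ← mul_apply, ← aeval_X_pow (R := K), ← map_mul, mul_comm, map_mul]

theorem aeval_apply_ne_zero_of_linearIndependent {w : V} {h : K[X]}
    (hw : LinearIndependent K fun i : Fin n => (φ ^ (i : ℕ)) w) (h0 : h ≠ 0)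
    (hdeg : h.natDegree < n) : aeval φ h w ≠ 0 := by
  intro hzero
  have hsum : ∑ i : Fin n, h.coeff i • (φ ^ (i : ℕ)) w = 0 := by
    rw [sum_fin (fun i a => a • (φ ^ i) w) (fun _ => zero_smul K _)
      ((degree_le_natDegree).trans_lt (WithBot.coe_lt_coe.mpr hdeg)), ← aeval_endomorphism, hzero]
  exact leadingCoeff_ne_zero.mpr h0 (Fintype.linearIndependent_iff.mp hw _ hsum ⟨_, hdeg⟩)

theorem isCoprime_of_linearIndependent (hP : aeval φ P = 0) (hP0 : P ≠ 0)
    (hPn : P.natDegree ≤ n)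
    (hw : LinearIndependent K fun i : Fin n => (φ ^ (i : ℕ)) (aeval φ f v)) : IsCoprime P f := by
  refine isCoprime_of_dvd P f (fun h => hP0 h.1) fun d hd hd0 ⟨h, hPdh⟩ ⟨f', hf⟩ => ?_
  subst hPdh hf
  have h0 : h ≠ 0 := right_ne_zero_of_mul hP0
  have hdeg : h.natDegree < n := by
    have := natDegree_pos_iff_degree_pos.mpr (degree_pos_of_ne_zero_of_nonunit hd0 hd)
    rw [natDegree_mul hd0 h0] at hPn
    omega
  refine aeval_apply_ne_zero_of_linearIndependent hw h0 hdeg ?_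
  rw [← mul_apply, ← map_mul, mul_left_comm, ← mul_assoc, map_mul, hP, zero_mul,
    LinearMap.zero_apply]

theorem isUnit_aeval_of_isCoprime (hP : aeval φ P = 0) (hPf : IsCoprime P f) :
    IsUnit (aeval φ f) := by
  obtain ⟨u, w, huw⟩ := hPf
  have hwf : aeval φ (w * f) = 1 := by
    rw [← sub_eq_of_eq_add' huw.symm, map_sub, map_one, map_mul, hP, mul_zero, sub_zero]
  exact isUnit_iff_exists.mpr ⟨aeval φ w, by rwa [← map_mul, mul_comm], by rwa [← map_mul]⟩

theorem IsCyclicBasis.aeval_apply (hv : IsCyclicBasis φ n v) (hf : IsUnit (aeval φ f)) :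
    IsCyclicBasis φ n (aeval φ f v) := by
  have hfam : (fun i : Fin n => (φ ^ (i : ℕ)) (aeval φ f v)) =
      aeval φ f ∘ fun i : Fin n => (φ ^ (i : ℕ)) v :=
    funext fun i => pow_apply_aeval_apply i v
  have hbij := (isUnit_iff _).mp hf
  rw [IsCyclicBasis, hfam]
  refine ⟨hv.1.map' _ (LinearMap.ker_eq_bot.mpr hbij.1), ?_⟩
  rw [Set.range_comp, ← Submodule.map_span, hv.2, Submodule.map_top,
    LinearMap.range_eq_top.mpr hbij.2]

theorem IsCyclicBasis.aeval_apply_iff_isCoprime (hv : IsCyclicBasis φ n v) (hP : aeval φ P = 0)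
    (hP0 : P ≠ 0) (hPn : P.natDegree ≤ n) :
    IsCyclicBasis φ n (aeval φ f v) ↔ IsCoprime P f :=
  ⟨fun hw => isCoprime_of_linearIndependent hP hP0 hPn hw.1,
    fun hPf => hv.aeval_apply (isUnit_aeval_of_isCoprime hP hPf)⟩

end Module.End

section Frobenius

open FiniteField Module.End

variable (Fq Fqn) [Field Fq] [Fintype Fq] [Field Fqn] [Algebra Fq Fqn]

theorem frobeniusAlgHom_toLinearMap_pow_apply (i : ℕ) (x : Fqn) :
    ((frobeniusAlgHom Fq Fqn).toLinearMap ^ i) x = x ^ Fintype.card Fq ^ i := by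
  rw [pow_apply, AlgHom.coe_toLinearMap, coe_frobeniusAlgHom, pow_iterate]

theorem circ_card_eq_aeval_frobeniusAlgHom (f : Fq[X]) (x : Fqn) :
    circ (Fintype.card Fq) f x = aeval (frobeniusAlgHom Fq Fqn).toLinearMap f x := by
  simp only [circ, aeval_endomorphism, frobeniusAlgHom_toLinearMap_pow_apply, Algebra.smul_def]

theorem isNormal_card_iff_isCyclicBasis (n : ℕ) (α : Fqn) :
    IsNormal Fq (Fintype.card Fq) n α ↔
      IsCyclicBasis (frobeniusAlgHom Fq Fqn).toLinearMap n α := by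
  simp only [IsNormal, IsCyclicBasis, frobeniusAlgHom_toLinearMap_pow_apply]

theorem aeval_frobeniusAlgHom_X_pow_finrank_sub_one [Finite Fqn] :
    aeval (frobeniusAlgHom Fq Fqn).toLinearMap (X ^ Module.finrank Fq Fqn - 1 : Fq[X]) = 0 :=
  minpoly_frobeniusAlgHom Fq Fqn ▸ minpoly.aeval _ _

end Frobenius

theorem stmt12_general (q n b : ℕ) [Field Fq] [Fintype Fq] [Field Fqn] [Algebra Fq Fqn]
    (hcard : Fintype.card Fq = q)
    (hn : 0 < n) (hrank : Module.finrank Fq Fqn = n)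
    (α : Fqn) (hα : IsNormal Fq q n α) (g : Fq[X]) :
    (∀ c : ℕ, c < b → IsNormal Fq q n (circ q g α - c • α)) ↔
      (∀ c : ℕ, c < b → IsCoprime ((X : Fq[X]) ^ n - 1) (g - C ((c : ℕ) : Fq))) := by
  subst hcard hrank
  have : FiniteDimensional Fq Fqn := Module.finite_of_finrank_pos hn
  have : Finite Fqn := Module.finite_of_finite Fq
  rw [isNormal_card_iff_isCyclicBasis] at hα
  refine forall₂_congr fun c _ => ?_
  have hβ : circ (Fintype.card Fq) g α - c • α =
      aeval (FiniteField.frobeniusAlgHom Fq Fqn).toLinearMap (g - C (c : Fq)) α := by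
    rw [circ_card_eq_aeval_frobeniusAlgHom, map_sub, LinearMap.sub_apply, aeval_C,
      Module.algebraMap_end_apply, Nat.cast_smul_eq_nsmul]
  rw [hβ, isNormal_card_iff_isCyclicBasis]
  exact hα.aeval_apply_iff_isCoprime (aeval_frobeniusAlgHom_X_pow_finrank_sub_one Fq Fqn)
    (by simpa using X_pow_sub_C_ne_zero hn (1 : Fq))
    (by simpa using (natDegree_X_pow_sub_C (r := (1 : Fq))).le)

theorem stmt12 (p m q n b : ℕ) [Field Fq] [Fintype Fq] [Field Fqn] [Algebra Fq Fqn]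
    (hp : p.Prime) (hm : 0 < m) (hpq : q = p ^ m) (hcard : Fintype.card Fq = q)
    (hn : 0 < n) (hrank : Module.finrank Fq Fqn = n) (hb : b ≤ p)
    (α : Fqn) (hα : IsNormal Fq q n α) (g : Fq[X]) :
    (∀ c : ℕ, c < b → IsNormal Fq q n (circ q g α - c • α)) ↔
      (∀ c : ℕ, c < b → IsCoprime ((X : Fq[X]) ^ n - 1) (g - C ((c : ℕ) : Fq))) :=
  stmt12_general q n b hcard hn hrank α hα g
end
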